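/- Let 0 < α < 1, ε > 0 and U_ε(r) = ((r+ε)^{2−α} − ε^{2−α})/((2−α)(1−α)) − (ε^{1−α}/(1−α))·r for r ≥ 0. Then 0 ≤ U_ε(r) ≤ r^{2−α}/(1−α) for all r ≥ 0. -/

import Mathlib

/-!
Both bounds come from the convexity of `t ↦ t ^ (2 - α)`. The tangent at `ε` lies below the graph,
which gives `U_ε ≥ 0`. The tangent at `r + ε`, evaluated at `ε`, bounds the increment
`(r + ε) ^ (2 - α) - ε ^ (2 - α)` by `(2 - α) (r + ε) ^ (1 - α) r`, and the subadditivity of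
`t ↦ t ^ (1 - α)` splits this into `(2 - α) r ^ (2 - α)` plus exactly the term subtracted in `U_ε`.
-/

open Real

theorem rpow_add_mul_sub_le_rpow {p x y : ℝ} (hp : 1 ≤ p) (hx : 0 < x) (hy : 0 ≤ y) :
    x ^ p + p * x ^ (p - 1) * (y - x) ≤ y ^ p := by
  have bernoulli := one_add_mul_self_le_rpow_one_add (s := (y - x) / x)
    (by rw [le_div_iff₀ hx]; linarith) hp
  rw [show 1 + (y - x) / x = y / x by field_simp; ring, div_rpow hy hx.le,
    le_div_iff₀ (rpow_pos_of_pos hx p)] at bernoulli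
  calc x ^ p + p * x ^ (p - 1) * (y - x) = (1 + p * ((y - x) / x)) * x ^ p := by
        rw [rpow_sub_one hx.ne']; field_simp
    _ ≤ y ^ p := bernoulli

theorem mul_rpow_sub_one_mul_le_rpow_add_sub_rpow {p ε r : ℝ} (hp : 1 ≤ p) (hε : 0 < ε)
    (hr : 0 ≤ r) : p * ε ^ (p - 1) * r ≤ (r + ε) ^ p - ε ^ p := by
  have tangent := rpow_add_mul_sub_le_rpow hp hε (y := r + ε) (by positivity)
  rw [add_sub_cancel_right] at tangent
  linarith

theorem rpow_add_sub_rpow_le {p ε r : ℝ} (hp1 : 1 ≤ p) (hp2 : p ≤ 2) (hε : 0 < ε) (hr : 0 ≤ r) :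
    (r + ε) ^ p - ε ^ p ≤ p * (r ^ p + ε ^ (p - 1) * r) := by
  have tangent := rpow_add_mul_sub_le_rpow hp1 (x := r + ε) (by positivity) hε.le
  have subadd : (r + ε) ^ (p - 1) ≤ r ^ (p - 1) + ε ^ (p - 1) :=
    rpow_add_le_add_rpow hr hε.le (by linarith) (by linarith)
  have hr_pow : r ^ p = r ^ (p - 1) * r := by
    rw [← rpow_add_one' hr (by linarith), sub_add_cancel]
  calc (r + ε) ^ p - ε ^ p ≤ p * (r + ε) ^ (p - 1) * r := by linarith
    _ ≤ p * (r ^ (p - 1) + ε ^ (p - 1)) * r := by gcongr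
    _ = p * (r ^ p + ε ^ (p - 1) * r) := by rw [hr_pow]; ring

/-- The entropy density `U_ε` satisfies `0 ≤ U_ε(r) ≤ r^{2-α}/(1-α)` for all `r ≥ 0`,
uniformly in `ε`. -/
theorem entropy_density_bounds (α ε : ℝ) (hα0 : 0 < α) (hα1 : α < 1) (hε : 0 < ε)
    (r : ℝ) (hr : 0 ≤ r) :
    0 ≤ ((r + ε) ^ (2 - α) - ε ^ (2 - α)) / ((2 - α) * (1 - α)) - (ε ^ (1 - α) / (1 - α)) * r ∧
    ((r + ε) ^ (2 - α) - ε ^ (2 - α)) / ((2 - α) * (1 - α)) - (ε ^ (1 - α) / (1 - α)) * r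
      ≤ r ^ (2 - α) / (1 - α) := by
  have hβ1 : 1 ≤ 2 - α := by linarith
  have hγ : 0 < 1 - α := by linarith
  have lower := mul_rpow_sub_one_mul_le_rpow_add_sub_rpow hβ1 hε hr
  have upper := rpow_add_sub_rpow_le hβ1 (by linarith) hε hr
  rw [show 2 - α - 1 = 1 - α by ring] at lower upper
  constructor
  · rw [sub_nonneg, le_div_iff₀ (by positivity)]
    calc ε ^ (1 - α) / (1 - α) * r * ((2 - α) * (1 - α)) = (2 - α) * ε ^ (1 - α) * r := by
          field_simp
      _ ≤ _ := lower
  · rw [sub_le_iff_le_add, div_le_iff₀ (by positivity)]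
    calc _ ≤ _ := upper
      _ = (r ^ (2 - α) / (1 - α) + ε ^ (1 - α) / (1 - α) * r) * ((2 - α) * (1 - α)) := by
          field_simp
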